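/- arXiv:2605.14457 — 2 statements merged into one kernel-verified Lean document; each statement's English description precedes it below -/
import Mathlib

section
/- The function N ↦ g(N) + ln Φ(N) on (c, ∞) tends to +∞ as N → c⁺ and tends to −∞ as N → ∞; moreover it is strictly decreasing on (c, ∞), so it has exactly one zero in (c, ∞). -/
/-!
On `(c, ∞)` the derivative `g` has the closed form
`log (1 - σ) + log (N - c) - log N + c / (N - c)`, whose own derivative `-c² / (N (N - c)²)`
is negative, so `g + log ∘ Φ` is strictly decreasing. Writing `t = N - c`, the term
`log t + c / t = (t log t + c) / t` blows up as `t → 0⁺` while `log Φ` stays continuous at `c`;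
as `N → ∞`, `g N → log (1 - σ)` while `log (Φ N) → -∞`. The intermediate value theorem
then produces a zero, unique by strict monotonicity.
-/

open Real Set Filter Topology

noncomputable def logAccuracySlope (a c N : ℝ) : ℝ :=
  log a + log (N - c) - log N + c / (N - c)

theorem hasDerivAt_mul_log_mul_one_sub_div {a c x : ℝ} (ha : a ≠ 0) (hx : x ≠ 0)
    (hxc : x ≠ c) :
    HasDerivAt (fun N => N * log (a * (1 - c / N))) (logAccuracySlope a c x) x := by
  have hxc' : x - c ≠ 0 := sub_ne_zero.2 hxc
  have hfrac : 1 - c / x = (x - c) / x := by field_simp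
  have hinner : HasDerivAt (fun N => a * (1 - c / N)) (a * (c / x ^ 2)) x := by
    have hdiv := (hasDerivAt_const x c).div (hasDerivAt_id x) hx
    refine ((hdiv.const_sub 1).const_mul a).congr_deriv ?_
    simp only [id]
    field_simp
    ring
  have hne : a * (1 - c / x) ≠ 0 := by rw [hfrac]; exact mul_ne_zero ha (div_ne_zero hxc' hx)
  refine ((hasDerivAt_id x).mul (hinner.log hne)).congr_deriv ?_
  rw [logAccuracySlope, hfrac, log_mul ha (div_ne_zero hxc' hx), log_div hxc' hx, id]
  field_simp
  ring

theorem hasDerivAt_logAccuracySlope {a c x : ℝ} (hx : x ≠ 0) (hxc : x ≠ c) :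
    HasDerivAt (logAccuracySlope a c) (-(c ^ 2 / (x * (x - c) ^ 2))) x := by
  have hxc' : x - c ≠ 0 := sub_ne_zero.2 hxc
  have hsub : HasDerivAt (fun N => N - c) 1 x := (hasDerivAt_id x).sub_const c
  refine ((((hsub.log hxc').const_add (log a)).sub (hasDerivAt_log hx)).add
    ((hasDerivAt_const x c).div hsub hxc')).congr_deriv ?_
  field_simp
  ring

theorem continuousOn_logAccuracySlope {a c : ℝ} (hc : 0 ≤ c) :
    ContinuousOn (logAccuracySlope a c) (Ioi c) := fun _ hx =>
  (hasDerivAt_logAccuracySlope (hc.trans_lt hx).ne' (ne_of_gt hx)).continuousAt.continuousWithinAt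

theorem strictAntiOn_logAccuracySlope {a c : ℝ} (hc : 0 < c) :
    StrictAntiOn (logAccuracySlope a c) (Ioi c) := by
  refine strictAntiOn_of_deriv_neg (convex_Ioi c) (continuousOn_logAccuracySlope hc.le) ?_
  rw [interior_Ioi]
  intro x (hx : c < x)
  rw [(hasDerivAt_logAccuracySlope (hc.trans hx).ne' hx.ne').deriv, neg_lt_zero]
  have := sub_pos.2 hx
  have := hc.trans hx
  positivity

theorem tendsto_log_add_div_nhdsGT_zero {c : ℝ} (hc : 0 < c) :
    Tendsto (fun t => log t + c / t) (𝓝[>] 0) atTop := by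
  have hmul : Tendsto (fun t => log t * t + c) (𝓝[>] 0) (𝓝 c) := by
    simpa using (tendsto_log_mul_rpow_nhdsGT_zero zero_lt_one).add_const c
  refine (hmul.pos_mul_atTop hc tendsto_inv_nhdsGT_zero).congr' ?_
  filter_upwards [self_mem_nhdsWithin] with t (ht : 0 < t)
  field_simp

theorem tendsto_logAccuracySlope_nhdsGT {a c : ℝ} (hc : 0 < c) :
    Tendsto (logAccuracySlope a c) (𝓝[>] c) atTop := by
  have hsub : Tendsto (fun N => N - c) (𝓝[>] c) (𝓝[>] 0) := by
    refine tendsto_nhdsWithin_iff.2 ⟨?_, ?_⟩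
    · simpa using ((continuous_sub_right c).tendsto c).mono_left (nhdsWithin_le_nhds (s := Ioi c))
    · filter_upwards [self_mem_nhdsWithin] with N (hN : c < N)
      exact sub_pos.2 hN
  have hlog : Tendsto (fun N => log a - log N) (𝓝[>] c) (𝓝 (log a - log c)) :=
    tendsto_const_nhds.sub ((continuousAt_log hc.ne').tendsto.mono_left nhdsWithin_le_nhds)
  refine (hlog.add_atTop ((tendsto_log_add_div_nhdsGT_zero hc).comp hsub)).congr fun N => ?_
  simp only [logAccuracySlope, Function.comp_apply]
  ring

theorem tendsto_logAccuracySlope_atTop (a c : ℝ) :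
    Tendsto (logAccuracySlope a c) atTop (𝓝 (log a)) := by
  have hdiv : Tendsto (fun N => c / (N - c)) atTop (𝓝 0) :=
    tendsto_const_nhds.div_atTop (tendsto_atTop_add_const_right _ (-c) tendsto_id)
  have := ((tendsto_log_comp_add_sub_log (-c)).const_add (log a)).add hdiv
  simp only [add_zero, ← sub_eq_add_neg] at this
  refine this.congr fun N => ?_
  simp only [logAccuracySlope]
  ring

theorem StrictAntiOn.existsUnique_eq_of_tendsto {f : ℝ → ℝ} {c : ℝ} (y : ℝ)
    (hf : StrictAntiOn f (Ioi c)) (hcont : ContinuousOn f (Ioi c))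
    (hleft : Tendsto f (𝓝[>] c) atTop) (hright : Tendsto f atTop atBot) :
    ∃! x, x ∈ Ioi c ∧ f x = y := by
  obtain ⟨a, hya, hca⟩ :=
    ((hleft.eventually (eventually_gt_atTop y)).and self_mem_nhdsWithin).exists
  obtain ⟨b, hby, hab⟩ :=
    ((hright.eventually (eventually_lt_atBot y)).and (eventually_gt_atTop a)).exists
  have hIcc : Icc a b ⊆ Ioi c := fun x hx => lt_of_lt_of_le hca hx.1
  obtain ⟨x, hx, hfx⟩ := intermediate_value_Ioo' hab.le (hcont.mono hIcc) ⟨hby, hya⟩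
  have hxc : x ∈ Ioi c := hIcc (Ioo_subset_Icc_self hx)
  exact ⟨x, ⟨hxc, hfx⟩, fun z ⟨hzc, hfz⟩ => hf.injOn hzc hxc (hfz.trans hfx.symm)⟩

theorem stmt_7_general (σ T M c : ℝ)
    (hσ1 : σ < 1) (hT : 0 < T) (hM : 0 < M)
    (hc : c = T / M)
    (L g : ℝ → ℝ)
    (hL : ∀ N : ℝ, L N = N * Real.log ((1 - σ) * (1 - c / N)))
    (hg : ∀ N : ℝ, g N = deriv L N)
    (Φ : ℝ → ℝ)
    (hΦcont : ContinuousOn Φ (Set.Ici 0))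
    (hΦpos : ∀ x : ℝ, 0 ≤ x → 0 < Φ x)
    (hΦanti : StrictAntiOn Φ (Set.Ici 0))
    (hΦlim : Filter.Tendsto Φ Filter.atTop (nhds 0)) :
    Filter.Tendsto (fun N => g N + Real.log (Φ N))
      (nhdsWithin c (Set.Ioi c)) Filter.atTop ∧
    Filter.Tendsto (fun N => g N + Real.log (Φ N)) Filter.atTop Filter.atBot ∧
    StrictAntiOn (fun N => g N + Real.log (Φ N)) (Set.Ioi c) ∧
    (∃! N : ℝ, N ∈ Set.Ioi c ∧ g N + Real.log (Φ N) = 0) := by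
  have hc0 : 0 < c := hc ▸ div_pos hT hM
  have hIoi : Ioi c ⊆ Ici 0 := Ioi_subset_Ici hc0.le
  have hg_eq : EqOn g (logAccuracySlope (1 - σ) c) (Ioi c) := fun N (hN : c < N) => by
    rw [hg, funext hL,
      (hasDerivAt_mul_log_mul_one_sub_div (by linarith) (hc0.trans hN).ne' hN.ne').deriv]
  set G := fun N => g N + log (Φ N)
  have hG_eq : EqOn (fun N => logAccuracySlope (1 - σ) c N + log (Φ N)) G (Ioi c) :=
    fun N hN => by simp only [G, hg_eq hN]
  have hlogΦ_cont : ContinuousOn (fun N => log (Φ N)) (Ici 0) :=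
    hΦcont.log fun x hx => (hΦpos x hx).ne'
  have hlogΦ_anti : AntitoneOn (fun N => log (Φ N)) (Ioi c) :=
    (strictMonoOn_log.comp_strictAntiOn (hΦanti.mono hIoi)
      fun x hx => hΦpos x (hIoi hx)).antitoneOn
  have hΦ_pos_lim : Tendsto Φ atTop (𝓝[>] 0) := tendsto_nhdsWithin_iff.2
    ⟨hΦlim, by filter_upwards [eventually_ge_atTop 0] with x hx using hΦpos x hx⟩
  have hleft : Tendsto G (𝓝[>] c) atTop :=
    ((tendsto_logAccuracySlope_nhdsGT hc0).atTop_add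
      ((hlogΦ_cont c hc0.le).tendsto.mono_left (nhdsWithin_mono c hIoi))).congr'
      (eventually_nhdsWithin_of_forall hG_eq)
  have hright : Tendsto G atTop atBot :=
    ((tendsto_logAccuracySlope_atTop _ c).add_atBot
      (tendsto_log_nhdsGT_zero.comp hΦ_pos_lim)).congr'
      (by filter_upwards [eventually_gt_atTop c] with N hN using hG_eq hN)
  have hanti : StrictAntiOn G (Ioi c) :=
    ((strictAntiOn_logAccuracySlope hc0).add_antitone hlogΦ_anti).congr hG_eq
  have hcont : ContinuousOn G (Ioi c) :=
    ((continuousOn_logAccuracySlope hc0.le).add (hlogΦ_cont.mono hIoi)).congr hG_eq.symm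
  exact ⟨hleft, hright, hanti, hanti.existsUnique_eq_of_tendsto 0 hcont hleft hright⟩

/-- With `g` the derivative of the baseline log-accuracy and `Φ`
an insight accessibility function (continuous on `[0, ∞)`, valued in `(0, 1]`,
`Φ 0 = 1`, strictly decreasing on `[0, ∞)`, `Φ x → 0` as `x → ∞`), the map
`N ↦ g N + ln (Φ N)` on `(c, ∞)` tends to `+∞` as `N → c⁺`, tends to `-∞` as
`N → ∞`, is strictly decreasing on `(c, ∞)`, and has exactly one zero in
`(c, ∞)`. -/
theorem stmt_7 (σ T M c : ℝ)
    (hσ0 : 0 < σ) (hσ1 : σ < 1) (hT : 0 < T) (hM : 0 < M)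
    (hc : c = T / M)
    (L g : ℝ → ℝ)
    (hL : ∀ N : ℝ, L N = N * Real.log ((1 - σ) * (1 - c / N)))
    (hg : ∀ N : ℝ, g N = deriv L N)
    (Φ : ℝ → ℝ)
    (hΦcont : ContinuousOn Φ (Set.Ici 0))
    (hΦpos : ∀ x : ℝ, 0 ≤ x → 0 < Φ x)
    (hΦle : ∀ x : ℝ, 0 ≤ x → Φ x ≤ 1)
    (hΦ0 : Φ 0 = 1)
    (hΦanti : StrictAntiOn Φ (Set.Ici 0))
    (hΦlim : Filter.Tendsto Φ Filter.atTop (nhds 0)) :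
    Filter.Tendsto (fun N => g N + Real.log (Φ N))
      (nhdsWithin c (Set.Ioi c)) Filter.atTop ∧
    Filter.Tendsto (fun N => g N + Real.log (Φ N)) Filter.atTop Filter.atBot ∧
    StrictAntiOn (fun N => g N + Real.log (Φ N)) (Set.Ioi c) ∧
    (∃! N : ℝ, N ∈ Set.Ioi c ∧ g N + Real.log (Φ N) = 0) :=
  stmt_7_general σ T M c hσ1 hT hM hc L g hL hg Φ hΦcont hΦpos hΦanti hΦlim
end

section
/- (Lemma 2, real-world CoT part.) The real-world CoT log-accuracy F_Φ(N) := L(N) + ∫_1^N ln Φ(x) dx attains its maximum over (c, ∞) at a unique point N_Φ* ∈ (c, ∞), and N_Φ* is characterized as the unique solution in (c, ∞) of the optimality condition g(N) = −ln Φ(N). -/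
/-!
On `(c, ∞)` the derivative of `F` is `g N + log (Φ N)`. With `s = c / (N - c)` one has
`g N = log (1 - σ) + (s - log (1 + s))`; as `s - log (1 + s)` is increasing for `s ≥ 0`
and unbounded, while `s` decreases from `∞` to `0`, `g` is strictly decreasing from `+∞`
(at `c⁺`) to `log (1 - σ)`. Since `log ∘ Φ` is continuous, strictly decreasing and tends
to `-∞`, `F'` has exactly one zero `N*`; `F` increases before it and decreases after it.
-/

open Real Filter Set Topology

theorem apply_lt_apply_of_hasDerivAt_of_strictAntiOn {f f' : ℝ → ℝ} {a x₀ y : ℝ}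
    (hf : ∀ x ∈ Ioi a, HasDerivAt f (f' x) x) (hf' : StrictAntiOn f' (Ioi a))
    (hx₀ : x₀ ∈ Ioi a) (hf'x₀ : f' x₀ = 0) (hy : y ∈ Ioi a) (hne : y ≠ x₀) : f y < f x₀ := by
  have hcont : ContinuousOn f (Ioi a) := fun x hx => (hf x hx).continuousAt.continuousWithinAt
  rcases hne.lt_or_gt with hlt | hgt
  · have hmono : StrictMonoOn f (Ioc a x₀) := by
      refine strictMonoOn_of_deriv_pos (convex_Ioc a x₀) (hcont.mono Ioc_subset_Ioi_self) ?_
      intro x hx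
      rw [interior_Ioc] at hx
      rw [(hf x hx.1).deriv, ← hf'x₀]
      exact hf' hx.1 hx₀ hx.2
    exact hmono ⟨hy, hlt.le⟩ ⟨hx₀, le_rfl⟩ hlt
  · have hanti : StrictAntiOn f (Ici x₀) := by
      refine strictAntiOn_of_deriv_neg (convex_Ici x₀)
        (hcont.mono fun x (hx : x₀ ≤ x) => hx₀.trans_le hx) ?_
      intro x hx
      rw [interior_Ici] at hx
      have hxa : x ∈ Ioi a := mem_Ioi.2 (lt_trans hx₀ hx)
      rw [(hf x hxa).deriv, ← hf'x₀]
      exact hf' hx₀ hxa hx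
    exact hanti self_mem_Ici hgt.le hgt

theorem exists_mem_Ioi_eq_zero_of_tendsto {f : ℝ → ℝ} {a : ℝ} (hf : ContinuousOn f (Ioi a))
    (h_left : Tendsto f (𝓝[>] a) atTop) (h_right : Tendsto f atTop atBot) :
    ∃ x ∈ Ioi a, f x = 0 :=
  isPreconnected_Ioi.intermediate_value_Iii (l₂ := 𝓝[>] a)
    (le_principal_iff.2 (Ioi_mem_atTop a)) inf_le_right hf h_right h_left (mem_univ 0)

theorem hasDerivAt_integral_of_continuousOn {E : Type*} [NormedAddCommGroup E] [NormedSpace ℝ E]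
    [CompleteSpace E] {f : ℝ → E} {s : Set ℝ} {a b : ℝ} (hs : IsOpen s) (hf : ContinuousOn f s)
    (hab : uIcc a b ⊆ s) : HasDerivAt (fun u => ∫ x in a..u, f x) (f b) b :=
  intervalIntegral.integral_hasDerivAt_right (hf.mono hab).intervalIntegrable
    (hf.stronglyMeasurableAtFilter hs b (hab right_mem_uIcc))
    (hf.continuousAt (hs.mem_nhds (hab right_mem_uIcc)))

theorem strictMonoOn_sub_log_one_add : StrictMonoOn (fun s : ℝ => s - log (1 + s)) (Ici 0) := by
  intro s (hs : 0 ≤ s) t (ht : 0 ≤ t) hst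
  have hs₁ : 0 < 1 + s := by linarith
  have hlog : log ((1 + t) / (1 + s)) < (1 + t) / (1 + s) - 1 :=
    log_lt_sub_one_of_pos (by positivity) (by rw [ne_eq, div_eq_one_iff_eq hs₁.ne']; linarith)
  have hle : (1 + t) / (1 + s) - 1 ≤ t - s := by
    rw [div_sub_one hs₁.ne', div_le_iff₀ hs₁]
    nlinarith
  rw [log_div (by linarith) hs₁.ne'] at hlog
  show s - log (1 + s) < t - log (1 + t)
  linarith

theorem tendsto_sub_log_one_add_atTop : Tendsto (fun s : ℝ => s - log (1 + s)) atTop atTop := by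
  -- `log (1 + s) = log 2 + log ((1 + s) / 2) ≤ log 2 + (1 + s) / 2 - 1`
  refine tendsto_atTop_mono' _ ?_
    (tendsto_atTop_add_const_right _ (1 / 2 - log 2) (tendsto_id.atTop_div_const two_pos))
  filter_upwards [eventually_ge_atTop 0] with s hs
  have h := log_le_sub_one_of_pos (show 0 < (1 + s) / 2 by positivity)
  rw [log_div (by positivity) two_ne_zero] at h
  simp only [id]
  linarith

theorem continuousAt_sub_log_one_add_zero : ContinuousAt (fun s : ℝ => s - log (1 + s)) 0 := by
  fun_prop (disch := norm_num)

section LogAccuracy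

variable {σ c N : ℝ}

noncomputable def logAccuracyDeriv (σ c N : ℝ) : ℝ := log ((1 - σ) * (1 - c / N)) + c / (N - c)

theorem hasDerivAt_mul_log_accuracy (hσ : σ < 1) (hN : 0 < N) (hcN : c < N) :
    HasDerivAt (fun x => x * log ((1 - σ) * (1 - c / x))) (logAccuracyDeriv σ c N) N := by
  have hp : HasDerivAt (fun x => (1 - σ) * (1 - c / x)) ((1 - σ) * (c / N ^ 2)) N := by
    have h := ((hasDerivAt_const N c).div (hasDerivAt_id' N) hN.ne').const_sub 1
    refine (h.const_mul (1 - σ)).congr_deriv ?_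
    field_simp
    ring
  have hpos : (1 - σ) * (1 - c / N) ≠ 0 := by
    have : c / N < 1 := (div_lt_one hN).2 hcN
    exact mul_ne_zero (by linarith) (by linarith)
  refine ((hasDerivAt_id' N).mul (hp.log hpos)).congr_deriv ?_
  have : N - c ≠ 0 := sub_ne_zero.2 hcN.ne'
  have : 1 - σ ≠ 0 := sub_ne_zero.2 hσ.ne'
  rw [logAccuracyDeriv, one_mul]
  congr 1
  field_simp

theorem logAccuracyDeriv_eq (hσ : σ < 1) (hN : 0 < N) (hcN : c < N) :
    logAccuracyDeriv σ c N = log (1 - σ) + (c / (N - c) - log (1 + c / (N - c))) := by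
  have hNc : 0 < N - c := sub_pos.2 hcN
  have h₁ : 1 - c / N = (1 + c / (N - c))⁻¹ := by
    rw [one_add_div hNc.ne', inv_div, sub_add_cancel, one_sub_div hN.ne']
  have h₂ : 0 < 1 + c / (N - c) := by rw [one_add_div hNc.ne']; exact div_pos (by linarith) hNc
  rw [logAccuracyDeriv, h₁, log_mul (by linarith) (inv_pos.2 h₂).ne', log_inv]
  ring

theorem strictAntiOn_logAccuracyDeriv (hσ : σ < 1) (hc : 0 < c) :
    StrictAntiOn (logAccuracyDeriv σ c) (Ioi c) := by
  have hshift : StrictAntiOn (fun N => c / (N - c)) (Ioi c) := fun x (hx : c < x) y _ hxy =>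
    div_lt_div_of_pos_left hc (sub_pos.2 hx) (by linarith)
  have hcomp := (strictMonoOn_sub_log_one_add.comp_strictAntiOn hshift fun N (hN : c < N) =>
    (div_pos hc (sub_pos.2 hN)).le).const_add (log (1 - σ))
  refine hcomp.congr fun N (hN : c < N) => ?_
  exact (logAccuracyDeriv_eq hσ (hc.trans hN) hN).symm

theorem continuousOn_logAccuracyDeriv (hσ : σ < 1) (hc : 0 < c) :
    ContinuousOn (logAccuracyDeriv σ c) (Ioi c) := by
  intro N (hN : c < N)
  have hN0 : 0 < N := hc.trans hN
  have : c / N < 1 := (div_lt_one hN0).2 hN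
  have : N - c ≠ 0 := sub_ne_zero.2 hN.ne'
  unfold logAccuracyDeriv
  apply ContinuousAt.continuousWithinAt
  fun_prop (disch := first
    | positivity | assumption | exact mul_ne_zero (by linarith) (by linarith))

theorem tendsto_logAccuracyDeriv_nhdsGT (hσ : σ < 1) (hc : 0 < c) :
    Tendsto (logAccuracyDeriv σ c) (𝓝[>] c) atTop := by
  have hgap : Tendsto (fun N => N - c) (𝓝[>] c) (𝓝[>] 0) :=
    tendsto_nhdsWithin_iff.2
      ⟨by simpa using ((continuous_sub_right c).tendsto c).mono_left nhdsWithin_le_nhds,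
        eventually_nhdsWithin_of_forall fun N (hN : c < N) => sub_pos.2 hN⟩
  have hshift : Tendsto (fun N => c / (N - c)) (𝓝[>] c) atTop := by
    simpa only [div_eq_mul_inv, Function.comp_def] using
      (tendsto_inv_nhdsGT_zero.comp hgap).const_mul_atTop hc
  refine (tendsto_atTop_add_const_left _ (log (1 - σ))
    (tendsto_sub_log_one_add_atTop.comp hshift)).congr' ?_
  filter_upwards [self_mem_nhdsWithin] with N (hN : c < N)
  exact (logAccuracyDeriv_eq hσ (hc.trans hN) hN).symm

theorem tendsto_logAccuracyDeriv_atTop (hσ : σ < 1) :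
    Tendsto (logAccuracyDeriv σ c) atTop (𝓝 (log (1 - σ))) := by
  have hshift : Tendsto (fun N => c / (N - c)) atTop (𝓝 0) :=
    tendsto_const_nhds.div_atTop (tendsto_atTop_add_const_right _ (-c) tendsto_id)
  have h := (continuousAt_sub_log_one_add_zero.tendsto.comp hshift).const_add (log (1 - σ))
  rw [add_zero, log_one, sub_self, add_zero] at h
  refine h.congr' ?_
  filter_upwards [eventually_gt_atTop 0, eventually_gt_atTop c] with N hN hcN
  exact (logAccuracyDeriv_eq hσ hN hcN).symm

end LogAccuracy

theorem stmt_8_general (σ T M c : ℝ)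
    (hσ1 : σ < 1) (hT : 0 < T) (hM : 0 < M)
    (hc : c = T / M)
    (L g : ℝ → ℝ)
    (hL : ∀ N : ℝ, L N = N * Real.log ((1 - σ) * (1 - c / N)))
    (hg : ∀ N : ℝ, g N = deriv L N)
    (Φ : ℝ → ℝ)
    (hΦcont : ContinuousOn Φ (Set.Ici 0))
    (hΦpos : ∀ x : ℝ, 0 ≤ x → 0 < Φ x)
    (hΦanti : StrictAntiOn Φ (Set.Ici 0))
    (hΦlim : Filter.Tendsto Φ Filter.atTop (nhds 0))
    (F : ℝ → ℝ)
    (hF : ∀ N : ℝ, F N = L N + ∫ x in (1:ℝ)..N, Real.log (Φ x)) :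
    ∃ Nstar : ℝ, Nstar ∈ Set.Ioi c ∧
      IsMaxOn F (Set.Ioi c) Nstar ∧
      (∀ N : ℝ, N ∈ Set.Ioi c → IsMaxOn F (Set.Ioi c) N → N = Nstar) ∧
      (∀ N : ℝ, N ∈ Set.Ioi c → (g N = -Real.log (Φ N) ↔ N = Nstar)) := by
  have hc0 : 0 < c := hc ▸ div_pos hT hM
  have hL' : ∀ N ∈ Ioi c, HasDerivAt L (logAccuracyDeriv σ c N) N := fun N (hN : c < N) => by
    rw [funext hL]
    exact hasDerivAt_mul_log_accuracy hσ1 (hc0.trans hN) hN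
  have hlogΦ : ContinuousOn (fun x => log (Φ x)) (Ioi 0) :=
    (hΦcont.mono Ioi_subset_Ici_self).log fun x (hx : 0 < x) => (hΦpos x hx.le).ne'
  set φ : ℝ → ℝ := fun N => logAccuracyDeriv σ c N + log (Φ N)
  have hF' : ∀ N ∈ Ioi c, HasDerivAt F (φ N) N := fun N (hN : c < N) => by
    rw [funext hF]
    exact (hL' N hN).add <| hasDerivAt_integral_of_continuousOn isOpen_Ioi hlogΦ
      fun x hx => (lt_min one_pos (hc0.trans hN)).trans_le hx.1
  have hφanti : StrictAntiOn φ (Ioi c) :=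
    (strictAntiOn_logAccuracyDeriv hσ1 hc0).add <|
      (strictMonoOn_log.comp_strictAntiOn hΦanti hΦpos).mono fun x (hx : c < x) => (hc0.trans hx).le
  obtain ⟨Nstar, hNstar, hφN⟩ : ∃ N ∈ Ioi c, φ N = 0 := exists_mem_Ioi_eq_zero_of_tendsto
    ((continuousOn_logAccuracyDeriv hσ1 hc0).add (hlogΦ.mono fun x (hx : c < x) => hc0.trans hx))
    ((tendsto_logAccuracyDeriv_nhdsGT hσ1 hc0).atTop_add <|
      (hlogΦ.continuousAt (Ioi_mem_nhds hc0)).tendsto.mono_left nhdsWithin_le_nhds)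
    ((tendsto_logAccuracyDeriv_atTop hσ1).add_atBot <| tendsto_log_nhdsGT_zero.comp <|
      tendsto_nhdsWithin_iff.2 ⟨hΦlim, (eventually_ge_atTop 0).mono hΦpos⟩)
  have hlt : ∀ y ∈ Ioi c, y ≠ Nstar → F y < F Nstar := fun y hy hne =>
    apply_lt_apply_of_hasDerivAt_of_strictAntiOn hF' hφanti hNstar hφN hy hne
  refine ⟨Nstar, hNstar, isMaxOn_iff.2 fun y hy => ?_, fun N hN hmax => ?_, fun N hN => ?_⟩
  · rcases eq_or_ne y Nstar with rfl | hne
    exacts [le_rfl, (hlt y hy hne).le]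
  · by_contra hne
    exact (hlt N hN hne).not_ge (hmax hNstar)
  · rw [hg, (hL' N hN).deriv, ← hφanti.injOn.eq_iff hN hNstar, hφN]
    exact eq_neg_iff_add_eq_zero

/-- Lemma 2, real-world CoT part: The real-world CoT
log-accuracy `F_Φ N = L N + ∫_1^N ln (Φ x) dx` attains its maximum over
`(c, ∞)` at a unique point `N_Φ* ∈ (c, ∞)`, and `N_Φ*` is the unique solution
in `(c, ∞)` of the optimality condition `g N = -ln (Φ N)`. -/
theorem stmt_8 (σ T M c : ℝ)
    (hσ0 : 0 < σ) (hσ1 : σ < 1) (hT : 0 < T) (hM : 0 < M)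
    (hc : c = T / M)
    (L g : ℝ → ℝ)
    (hL : ∀ N : ℝ, L N = N * Real.log ((1 - σ) * (1 - c / N)))
    (hg : ∀ N : ℝ, g N = deriv L N)
    (Φ : ℝ → ℝ)
    (hΦcont : ContinuousOn Φ (Set.Ici 0))
    (hΦpos : ∀ x : ℝ, 0 ≤ x → 0 < Φ x)
    (hΦle : ∀ x : ℝ, 0 ≤ x → Φ x ≤ 1)
    (hΦ0 : Φ 0 = 1)
    (hΦanti : StrictAntiOn Φ (Set.Ici 0))
    (hΦlim : Filter.Tendsto Φ Filter.atTop (nhds 0))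
    (F : ℝ → ℝ)
    (hF : ∀ N : ℝ, F N = L N + ∫ x in (1:ℝ)..N, Real.log (Φ x)) :
    ∃ Nstar : ℝ, Nstar ∈ Set.Ioi c ∧
      IsMaxOn F (Set.Ioi c) Nstar ∧
      (∀ N : ℝ, N ∈ Set.Ioi c → IsMaxOn F (Set.Ioi c) N → N = Nstar) ∧
      (∀ N : ℝ, N ∈ Set.Ioi c → (g N = -Real.log (Φ N) ↔ N = Nstar)) :=
  stmt_8_general σ T M c hσ1 hT hM hc L g hL hg Φ hΦcont hΦpos hΦanti hΦlim F hF
end
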